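/- For every rational number m, the values X1 = (m−1)(m+1)^2·f1(m)·f2(−m), X2 = −(m+1)(m−1)^2·f1(−m)·f2(m), X3 = (m−1)^2·f3(m)·f4(m), X4 = (m+1)^2·f3(−m)·f4(−m), Y1 = (m−1)^3·f1(m)·f2(m), Y2 = −(m+1)^3·f1(−m)·f2(−m), Y3 = −(m−1)(m+1)·f3(m)·f4(−m), Y4 = −(m−1)(m+1)·f3(−m)·f4(m) satisfy simultaneously: X1^5+X2^5+X3^5+X4^5 = Y1^5+Y2^5+Y3^5+Y4^5, X1·X2 = Y1·Y2, X3·X4 = Y3·Y4, and X1+X2+X3+X4 = Y1+Y2+Y3+Y4. -/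
import Mathlib



def f1 (m : ℚ) : ℚ :=
  5 * m ^ 14 + 7 * m ^ 13 + 71 * m ^ 12 + 30 * m ^ 11 + 345 * m ^ 10 +
    17 * m ^ 9 + 907 * m ^ 8 - 60 * m ^ 7 + 1311 * m ^ 6 - 71 * m ^ 5 +
    1109 * m ^ 4 + 62 * m ^ 3 + 323 * m ^ 2 + 15 * m + 25

def f2 (m : ℚ) : ℚ :=
  m ^ 10 + 7 * m ^ 9 + 29 * m ^ 8 + 44 * m ^ 7 + 122 * m ^ 6 + 98 * m ^ 5 +
    202 * m ^ 4 + 92 * m ^ 3 + 133 * m ^ 2 + 15 * m + 25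

def f3 (m : ℚ) : ℚ :=
  5 * m ^ 14 + 21 * m ^ 13 + 29 * m ^ 12 + 202 * m ^ 11 + 109 * m ^ 10 +
    755 * m ^ 9 + 173 * m ^ 8 + 1388 * m ^ 7 + 23 * m ^ 6 + 1259 * m ^ 5 -
    177 * m ^ 4 + 426 * m ^ 3 - 137 * m ^ 2 + 45 * m - 25

def f4 (m : ℚ) : ℚ :=
  m ^ 11 + 6 * m ^ 10 + 8 * m ^ 9 + 57 * m ^ 8 + 46 * m ^ 7 + 184 * m ^ 6 +
    92 * m ^ 5 + 294 * m ^ 4 + 89 * m ^ 3 + 202 * m ^ 2 + 20 * m + 25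

set_option maxHeartbeats 2000000 in
theorem stmt_11 (m : ℚ) :
    let X₁ := (m - 1) * (m + 1) ^ 2 * f1 m * f2 (-m)
    let X₂ := -((m + 1) * (m - 1) ^ 2 * f1 (-m) * f2 m)
    let X₃ := (m - 1) ^ 2 * f3 m * f4 m
    let X₄ := (m + 1) ^ 2 * f3 (-m) * f4 (-m)
    let Y₁ := (m - 1) ^ 3 * f1 m * f2 m
    let Y₂ := -((m + 1) ^ 3 * f1 (-m) * f2 (-m))
    let Y₃ := -((m - 1) * (m + 1) * f3 m * f4 (-m))
    let Y₄ := -((m - 1) * (m + 1) * f3 (-m) * f4 m)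
    X₁ ^ 5 + X₂ ^ 5 + X₃ ^ 5 + X₄ ^ 5 = Y₁ ^ 5 + Y₂ ^ 5 + Y₃ ^ 5 + Y₄ ^ 5 ∧
    X₁ * X₂ = Y₁ * Y₂ ∧ X₃ * X₄ = Y₃ * Y₄ ∧
    X₁ + X₂ + X₃ + X₄ = Y₁ + Y₂ + Y₃ + Y₄ := by
  refine ⟨?_, ?_, ?_, ?_⟩ <;> simp only [f1, f2, f3, f4] <;> ring
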